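/- arXiv:1309.0974 — 3 statements merged into one kernel-verified Lean document; each statement's English description precedes it below -/
import Mathlib

section
/- Let N be a finite group containing two normal subgroups K₁ and K₂ with K₁ ≅ K₂, K₁ ∩ K₂ = 1, and N/K₁ ≅ N/K₂ ≅ SL(2,3). Then N is isomorphic to one of: SL(2,3), SL(2,3) × SL(2,3), (Q₈ × Q₈) ⋊ C₃ (with C₃ acting simultaneously as the order-3 automorphism i ↦ j, j ↦ ij on each factor), or SL(2,3) × C₂. -/
abbrev SL23 := Matrix.SpecialLinearGroup (Fin 2) (ZMod 3)

/-!
The two quotient maps embed `N` into `SL(2,3) × SL(2,3)` as a subgroup `G` projecting onto both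
factors, and the kernels of the two projections of `G` are copies of `K₂` and `K₁` inside
`SL(2,3)`: normal subgroups of the same order. The normal subgroups `1 < Z < Q₈ < SL(2,3)` have
distinct orders, so both kernels are the same `M`. By Goursat, `G / (M × M)` is the graph of an
automorphism of `SL(2,3) / M`, and every such automorphism lifts to an automorphism `α` of
`SL(2,3)`; hence `G = {(a, α a * m) | m ∈ M}`. For `M = 1` and `M = SL(2,3)` this is the diagonal
and the whole product, for the central `M = Z` it is `SL(2,3) × C₂`, and for `M = Q₈` the map
`((p, q), k) ↦ (p u^k, α (q u^k))`, with `u` of order 3, identifies `(Q₈ × Q₈) ⋊ C₃` with `G`.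
-/

namespace Subgroup

variable {A B : Type*} [Group A] [Group B] {G : Subgroup (A × B)}

lemma exists_mk_mem_of_surjective_fst (hG : Function.Surjective (Prod.fst ∘ G.subtype)) (a : A) :
    ∃ b, (a, b) ∈ G := by
  obtain ⟨⟨⟨a, b⟩, hab⟩, rfl⟩ := hG a
  exact ⟨b, hab⟩

lemma mem_goursatFst_iff_mem_goursatSnd {a : A} {b : B} (hab : (a, b) ∈ G) :
    a ∈ G.goursatFst ↔ b ∈ G.goursatSnd := by
  simp only [mem_goursatFst, mem_goursatSnd]
  constructor <;> intro h
  · simpa using G.mul_mem (G.inv_mem h) hab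
  · simpa using G.mul_mem hab (G.inv_mem h)

lemma mk_mem_of_mul_inv_mem_goursatSnd {a : A} {b c : B} (hab : (a, b) ∈ G)
    (hc : c * b⁻¹ ∈ G.goursatSnd) : (a, c) ∈ G := by
  simpa using G.mul_mem (mem_goursatSnd.1 hc) hab

lemma mk_mem_of_closure_eq_top {S : Set A} (hS : closure S = ⊤) (α : A →* B)
    (h : ∀ s ∈ S, (s, α s) ∈ G) (a : A) : (a, α a) ∈ G := by
  have : closure S ≤ G.comap ((MonoidHom.id A).prod α) := (closure_le _).2 h
  exact this (hS ▸ mem_top a)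

lemma eq_top_of_goursatFst_eq_top (h₁ : G.goursatFst = ⊤) (h₂ : G.goursatSnd = ⊤) : G = ⊤ :=
  top_unique (by simpa [h₁, h₂] using G.goursatFst_prod_goursatSnd_le)

noncomputable def fstMulEquivOfGoursatSndEqBot (hG : Function.Surjective (Prod.fst ∘ G.subtype))
    (h : G.goursatSnd = ⊥) : G ≃* A :=
  MulEquiv.ofBijective ((MonoidHom.fst A B).comp G.subtype) ⟨by
    rw [injective_iff_map_eq_one]
    rintro ⟨⟨a, b⟩, hab⟩ (rfl : a = 1)
    have : b ∈ G.goursatSnd := mem_goursatSnd.2 hab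
    rw [h, mem_bot] at this
    subst this
    rfl, hG⟩

def prodGoursatSndEquiv (α : A →* B) (hα : ∀ a, (a, α a) ∈ G) : A × G.goursatSnd ≃ G where
  toFun p := ⟨(p.1, α p.1 * p.2), by simpa using G.mul_mem (hα p.1) (mem_goursatSnd.1 p.2.2)⟩
  invFun g := (g.1.1, ⟨(α g.1.1)⁻¹ * g.1.2,
    mem_goursatSnd.2 (by simpa [Prod.mul_def] using G.mul_mem (G.inv_mem (hα g.1.1)) g.2)⟩)
  left_inv p := by simp
  right_inv g := by simp

def prodGoursatSndMulEquiv (α : A →* B) (hα : ∀ a, (a, α a) ∈ G)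
    (hZ : G.goursatSnd ≤ center B) : A × G.goursatSnd ≃* G :=
  { prodGoursatSndEquiv α hα with
    map_mul' p q := by
      have hq : α q.1 * p.2 = p.2 * α q.1 := mem_center_iff.1 (hZ p.2.2) _
      ext
      · rfl
      · simp only [prodGoursatSndEquiv, Prod.fst_mul, Prod.snd_mul, map_mul, MulMemClass.coe_mul]
        rw [mul_assoc, ← mul_assoc (α q.1), hq]
        simp only [mul_assoc] }

end Subgroup

namespace MonoidHom

variable {N A B : Type*} [Group N] [Group A] [Group B]

lemma card_range_comp_subtype {K : Subgroup N} {f : N →* B} (h : K ⊓ f.ker = ⊥) :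
    Nat.card (f.comp K.subtype).range = Nat.card K := by
  refine (Nat.card_congr (MonoidHom.ofInjective (f := f.comp K.subtype) ?_).toEquiv).symm
  rw [injective_iff_map_eq_one]
  intro k hk
  have : (k : N) ∈ K ⊓ f.ker := ⟨k.2, hk⟩
  rw [h, Subgroup.mem_bot] at this
  exact Subtype.ext this

variable (f₁ : N →* A) (f₂ : N →* B)

lemma goursatSnd_range_prod : (f₁.prod f₂).range.goursatSnd = (f₂.comp f₁.ker.subtype).range := by
  ext b
  simp [Prod.ext_iff]

lemma goursatFst_range_prod : (f₁.prod f₂).range.goursatFst = (f₁.comp f₂.ker.subtype).range := by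
  ext a
  simp [Prod.ext_iff, and_comm]

lemma card_goursatSnd_range_prod (h : f₁.ker ⊓ f₂.ker = ⊥) :
    Nat.card (f₁.prod f₂).range.goursatSnd = Nat.card f₁.ker := by
  rw [goursatSnd_range_prod, card_range_comp_subtype h]

lemma card_goursatFst_range_prod (h : f₁.ker ⊓ f₂.ker = ⊥) :
    Nat.card (f₁.prod f₂).range.goursatFst = Nat.card f₂.ker := by
  rw [goursatFst_range_prod, card_range_comp_subtype (by rwa [inf_comm])]

lemma surjective_fst_comp_range_prod (hf₁ : Function.Surjective f₁) :
    Function.Surjective (Prod.fst ∘ (f₁.prod f₂).range.subtype) := fun a =>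
  let ⟨n, hn⟩ := hf₁ a
  ⟨⟨_, n, rfl⟩, hn⟩

lemma surjective_snd_comp_range_prod (hf₂ : Function.Surjective f₂) :
    Function.Surjective (Prod.snd ∘ (f₁.prod f₂).range.subtype) := fun b =>
  let ⟨n, hn⟩ := hf₂ b
  ⟨⟨_, n, rfl⟩, hn⟩

lemma map_pow_apply_of_map_apply_eq_conj {H K : Type*} [Group H] [Group K]
    (F : H →* K) (τ : MulAut H) (g : K) (hF : ∀ p, F (τ p) = g * F p * g⁻¹) (m : ℕ) (p : H) :
    F ((τ ^ m) p) = g ^ m * F p * (g ^ m)⁻¹ := by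
  induction m generalizing p with
  | zero => simp
  | succ m ih => rw [pow_succ, MulAut.mul_apply, ih, hF]; group

end MonoidHom

def zmodPowHom {H : Type*} [Group H] (n : ℕ) [NeZero n] (h : H) (hn : h ^ n = 1) :
    Multiplicative (ZMod n) →* H where
  toFun k := h ^ k.toAdd.val
  map_one' := by simp
  map_mul' k l := by
    rw [toAdd_mul, ZMod.val_add, ← pow_eq_pow_mod _ hn, pow_add]

namespace QuaternionGroup

def ofGenerators {H : Type*} [Monoid H] (i j : H) : QuaternionGroup 2 → H
  | a k => i ^ k.val
  | xa k => j * i ^ k.val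

def rotation : QuaternionGroup 2 ≃* QuaternionGroup 2 where
  toFun := ofGenerators (xa 0) (a 1 * xa 0)
  invFun := ofGenerators (xa 0) (a 1 * xa 0) ∘ ofGenerators (xa 0) (a 1 * xa 0)
  left_inv g := by revert g; decide
  right_inv g := by revert g; decide
  map_mul' := by decide

lemma rotation_a_one : rotation (a 1) = xa 0 := by decide

lemma rotation_xa_zero : rotation (xa 0) = a 1 * xa 0 := by decide

def diagonalRotation : Multiplicative (ZMod 3) →* MulAut (QuaternionGroup 2 × QuaternionGroup 2) :=
  zmodPowHom 3 (MulEquiv.prodCongr rotation rotation) (MulEquiv.ext (by decide))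

lemma diagonalRotation_ofAdd_one (x y : QuaternionGroup 2) :
    diagonalRotation (Multiplicative.ofAdd 1) (x, y) = (rotation x, rotation y) :=
  rfl

abbrev PairSemidirect :=
  (QuaternionGroup 2 × QuaternionGroup 2) ⋊[diagonalRotation] Multiplicative (ZMod 3)

end QuaternionGroup

namespace SL23

open QuaternionGroup

def u : SL23 := ⟨!![1, 1; 0, 1], by decide⟩
def t : SL23 := ⟨!![0, -1; 1, 0], by decide⟩
def j : SL23 := ⟨!![1, 1; 1, -1], by decide⟩

lemma u_pow_three : u ^ 3 = 1 := by decide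

/-- `Z = {±1}` is the centre and `Q ≅ Q₈` the Sylow `2`-subgroup; in `SL(2,3)` they consist of
the elements of order dividing `2` and `4` respectively. -/
def Z : Subgroup SL23 where
  carrier := {g | g ^ 2 = 1}
  one_mem' := by decide
  mul_mem' {a b} := by revert a b; decide
  inv_mem' {a} := by revert a; decide

def Q : Subgroup SL23 where
  carrier := {g | g ^ 4 = 1}
  one_mem' := by decide
  mul_mem' {a b} := by revert a b; decide
  inv_mem' {a} := by revert a; decide

instance : DecidablePred (· ∈ Z) := fun g => decidable_of_iff (g ^ 2 = 1) Iff.rfl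
instance : DecidablePred (· ∈ Q) := fun g => decidable_of_iff (g ^ 4 = 1) Iff.rfl

lemma card_Z : Nat.card Z = 2 := by rw [Nat.card_eq_fintype_card]; decide
lemma card_Q : Nat.card Q = 8 := by rw [Nat.card_eq_fintype_card]; decide
lemma card_SL23 : Nat.card SL23 = 24 := by rw [Nat.card_eq_fintype_card]; rfl

lemma Z_le_Q : Z ≤ Q := by intro g hg; revert g; decide

lemma Z_le_center : Z ≤ Subgroup.center SL23 := by
  intro g hg
  rw [Subgroup.mem_center_iff]
  revert g
  decide

lemma map_mem_Q (α : SL23 ≃* SL23) {g : SL23} (hg : g ∈ Q) : α g ∈ Q := by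
  change α g ^ 4 = 1
  rw [← map_pow, show g ^ 4 = 1 from hg, map_one]

lemma closure_u_t : Subgroup.closure {u, t} = ⊤ := by
  have hu : u ∈ Subgroup.closure {u, t} := Subgroup.subset_closure (by simp)
  have ht : t ∈ Subgroup.closure {u, t} := Subgroup.subset_closure (by simp)
  have hword : ∀ x : SL23, ∃ a : Fin 3, ∃ b : Fin 4, ∃ c : Fin 3,
      x = u ^ (a : ℕ) * t ^ (b : ℕ) * u ^ (c : ℕ) := by
    decide +kernel
  refine eq_top_iff.2 fun x _ => ?_
  obtain ⟨a, b, c, rfl⟩ := hword x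
  exact mul_mem (mul_mem (pow_mem hu _) (pow_mem ht _)) (pow_mem hu _)

section NormalSubgroups

variable {M : Subgroup SL23} [M.Normal]

open scoped commutatorElement in
lemma Q_le_of_not_le_Z (h : ¬ M ≤ Z) : Q ≤ M := by
  have hcomm : ∀ g x : SL23, g ∉ Z → x ∈ Q → ∃ h k : SL23, ⁅g, h⁆ * ⁅g, k⁆ = x := by
    decide +kernel
  obtain ⟨g, hgM, hgZ⟩ := Set.not_subset.1 h
  intro x hx
  obtain ⟨h, k, rfl⟩ := hcomm g x hgZ hx
  have hcomm_mem : ∀ h, ⁅g, h⁆ ∈ M := fun h => by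
    rw [commutatorElement_def, mul_assoc, mul_assoc]
    exact mul_mem hgM (by simpa only [mul_assoc] using ‹M.Normal›.conj_mem _ (inv_mem hgM) h)
  exact mul_mem (hcomm_mem h) (hcomm_mem k)

lemma Z_le_of_ne_bot (h : M ≠ ⊥) : Z ≤ M := by
  by_cases hZ : M ≤ Z
  · have hZ_eq : ∀ g x : SL23, g ∈ Z → g ≠ 1 → x ∈ Z → x = 1 ∨ x = g := by decide +kernel
    obtain ⟨g, hgM, hg1⟩ := (Subgroup.bot_or_exists_ne_one M).resolve_left h
    intro x hx
    rcases hZ_eq g x (hZ hgM) hg1 hx with rfl | rfl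
    exacts [one_mem M, hgM]
  · exact Z_le_Q.trans (Q_le_of_not_le_Z hZ)

lemma eq_top_of_not_le_Q (h : ¬ M ≤ Q) : M = ⊤ := by
  have hcoset : ∀ g x : SL23, g ∉ Q → ∃ e : Fin 3, x * g ^ (e : ℕ) ∈ Q := by decide +kernel
  have hQM : Q ≤ M := Q_le_of_not_le_Z fun hZ => h (hZ.trans Z_le_Q)
  obtain ⟨g, hgM, hgQ⟩ := Set.not_subset.1 h
  refine eq_top_iff.2 fun x _ => ?_
  obtain ⟨e, he⟩ := hcoset g x hgQ
  simpa using mul_mem (hQM he) (inv_mem (pow_mem hgM e))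

variable (M) in
lemma normal_eq_bot_or_Z_or_Q_or_top : M = ⊥ ∨ M = Z ∨ M = Q ∨ M = ⊤ := by
  by_cases hQ : M ≤ Q
  · by_cases hZ : M ≤ Z
    · by_cases hbot : M = ⊥
      exacts [Or.inl hbot, Or.inr (Or.inl (le_antisymm hZ (Z_le_of_ne_bot hbot)))]
    · exact Or.inr (Or.inr (Or.inl (le_antisymm hQ (Q_le_of_not_le_Z hZ))))
  · exact Or.inr (Or.inr (Or.inr (eq_top_of_not_le_Q hQ)))

end NormalSubgroups

lemma normal_eq_of_card_eq {M M' : Subgroup SL23} [M.Normal] [M'.Normal]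
    (h : Nat.card M = Nat.card M') : M = M' := by
  rcases normal_eq_bot_or_Z_or_Q_or_top M with rfl | rfl | rfl | rfl <;>
  rcases normal_eq_bot_or_Z_or_Q_or_top M' with rfl | rfl | rfl | rfl <;>
  simp only [Subgroup.card_bot, Subgroup.card_top, card_Z, card_Q, card_SL23] at h <;>
  first | rfl | omega

def diagConjFun (g : SL23) : SL23 :=
  ⟨!![1, 0; 0, -1] * g.1 * !![1, 0; 0, -1], by rw [Matrix.det_mul, Matrix.det_mul, g.2]; decide⟩

def diagConj : SL23 ≃* SL23 where
  toFun := diagConjFun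
  invFun := diagConjFun
  left_inv g := by revert g; decide
  right_inv g := by revert g; decide
  map_mul' := by decide

/-- The hypotheses say that `u ↦ v`, `t ↦ w` respects the defining relations of `SL(2,3)/Z ≅ A₄`;
all automorphisms of `A₄` come from conjugation in `GL(2,3)`. -/
lemma exists_mulAut_of_mod_Z (v w : SL23) (hv : v ∉ Z) (hv3 : v ^ 3 ∈ Z) (hw : w ∉ Z)
    (hw2 : w ^ 2 ∈ Z) (hvw : (v * w) ^ 3 ∈ Z) :
    ∃ α : SL23 ≃* SL23, α u * v⁻¹ ∈ Z ∧ α t * w⁻¹ ∈ Z := by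
  have key : ∀ v w : SL23, v ∉ Z → v ^ 3 ∈ Z → w ∉ Z → w ^ 2 ∈ Z → (v * w) ^ 3 ∈ Z →
      ∃ s : SL23, (s * u * s⁻¹ * v⁻¹ ∈ Z ∧ s * t * s⁻¹ * w⁻¹ ∈ Z) ∨
        (s * diagConj u * s⁻¹ * v⁻¹ ∈ Z ∧ s * diagConj t * s⁻¹ * w⁻¹ ∈ Z) := by
    decide +kernel
  obtain ⟨s, h | h⟩ := key v w hv hv3 hw hw2 hvw
  exacts [⟨MulAut.conj s, h⟩, ⟨diagConj.trans (MulAut.conj s), h⟩]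

lemma exists_mulAut_of_mod_Q (v : SL23) (hv : v ∉ Q) : ∃ α : SL23 ≃* SL23, α u * v⁻¹ ∈ Q := by
  have key : ∀ v : SL23, v ∉ Q → u * v⁻¹ ∈ Q ∨ diagConj u * v⁻¹ ∈ Q := by decide +kernel
  exact (key v hv).elim (fun h => ⟨MulEquiv.refl _, h⟩) (fun h => ⟨diagConj, h⟩)

def quaternionHom : QuaternionGroup 2 →* SL23 where
  toFun := ofGenerators t j
  map_one' := by decide
  map_mul' := by decide

lemma quaternionHom_injective : Function.Injective quaternionHom :=
  (injective_iff_map_eq_one _).2 (by decide)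

lemma quaternionHom_mem_Q : ∀ g, quaternionHom g ∈ Q := by decide

lemma quaternionHom_rotation : ∀ g, quaternionHom (rotation g) = u * quaternionHom g * u⁻¹ := by
  decide

lemma prodMap_quaternionHom_rotation (α : SL23 ≃* SL23)
    (p : QuaternionGroup 2 × QuaternionGroup 2) :
    quaternionHom.prodMap (α.toMonoidHom.comp quaternionHom) (rotation.prodCongr rotation p) =
      (u, α u) * quaternionHom.prodMap (α.toMonoidHom.comp quaternionHom) p * (u, α u)⁻¹ :=
  Prod.ext (quaternionHom_rotation p.1) <| by
    change α (quaternionHom (rotation p.2)) = _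
    rw [quaternionHom_rotation, map_mul, map_mul, map_inv]; rfl

def quaternionLift (α : SL23 ≃* SL23) : PairSemidirect →* SL23 × SL23 :=
  SemidirectProduct.lift (quaternionHom.prodMap (α.toMonoidHom.comp quaternionHom))
    (zmodPowHom 3 (u, α u) (by rw [Prod.pow_mk, ← map_pow, u_pow_three, map_one]; rfl))
    fun k => MonoidHom.ext fun p =>
      MonoidHom.map_pow_apply_of_map_apply_eq_conj _ _ _ (prodMap_quaternionHom_rotation α) _ p

lemma quaternionLift_injective (α : SL23 ≃* SL23) : Function.Injective (quaternionLift α) := by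
  rw [injective_iff_map_eq_one]
  rintro ⟨⟨p, q⟩, k⟩ h
  have h₁ : quaternionHom p * u ^ k.toAdd.val = 1 := congrArg Prod.fst h
  have h₂ : α (quaternionHom q) * α u ^ k.toAdd.val = 1 := congrArg Prod.snd h
  have hk : k = 1 := by
    have key : ∀ k : Multiplicative (ZMod 3), u ^ k.toAdd.val ∈ Q → k = 1 := by decide
    exact key k (by rw [eq_inv_of_mul_eq_one_right h₁]; exact inv_mem (quaternionHom_mem_Q p))
  subst hk
  simp only [toAdd_one, ZMod.val_zero, pow_zero, mul_one, map_eq_one_iff _ α.injective] at h₁ h₂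
  rw [quaternionHom_injective (h₁.trans quaternionHom.map_one.symm),
    quaternionHom_injective (h₂.trans quaternionHom.map_one.symm)]
  rfl

section Subdirect

variable (G : Subgroup (SL23 × SL23)) (hG : Function.Surjective (Prod.fst ∘ G.subtype))
include hG

lemma exists_graph_le_of_lift (hlift : ∀ v w, (u, v) ∈ G → (t, w) ∈ G →
      ∃ α : SL23 ≃* SL23, α u * v⁻¹ ∈ G.goursatSnd ∧ α t * w⁻¹ ∈ G.goursatSnd) :
    ∃ α : SL23 ≃* SL23, ∀ a, (a, α a) ∈ G := by
  obtain ⟨v, hv⟩ := G.exists_mk_mem_of_surjective_fst hG u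
  obtain ⟨w, hw⟩ := G.exists_mk_mem_of_surjective_fst hG t
  obtain ⟨α, hαu, hαt⟩ := hlift v w hv hw
  refine ⟨α, G.mk_mem_of_closure_eq_top closure_u_t α.toMonoidHom ?_⟩
  rintro s (rfl | rfl)
  exacts [G.mk_mem_of_mul_inv_mem_goursatSnd hv hαu, G.mk_mem_of_mul_inv_mem_goursatSnd hw hαt]

lemma exists_graph_le_of_goursat_eq_Z (h₁ : G.goursatFst = Z) (h₂ : G.goursatSnd = Z) :
    ∃ α : SL23 ≃* SL23, ∀ a, (a, α a) ∈ G := by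
  have hZ : ∀ {a b : SL23}, (a, b) ∈ G → (a ∈ Z ↔ b ∈ Z) := fun h => by
    simpa only [h₁, h₂] using G.mem_goursatFst_iff_mem_goursatSnd h
  have hpow : ∀ {a b : SL23} (n : ℕ), (a, b) ∈ G → (a ^ n, b ^ n) ∈ G := fun n h => G.pow_mem h n
  refine exists_graph_le_of_lift G hG fun v w hv hw =>
    h₂ ▸ exists_mulAut_of_mod_Z v w ?_ ?_ ?_ ?_ ?_
  · rw [← hZ hv]; decide
  · rw [← hZ (hpow 3 hv)]; decide
  · rw [← hZ hw]; decide
  · rw [← hZ (hpow 2 hw)]; decide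
  · have hvw : (u * t, v * w) ∈ G := G.mul_mem hv hw
    rw [← hZ (hpow 3 hvw)]; decide

lemma exists_graph_le_of_goursat_eq_Q (h₁ : G.goursatFst = Q) (h₂ : G.goursatSnd = Q) :
    ∃ α : SL23 ≃* SL23, ∀ a, (a, α a) ∈ G := by
  have hQ : ∀ {a b : SL23}, (a, b) ∈ G → (a ∈ Q ↔ b ∈ Q) := fun h => by
    simpa only [h₁, h₂] using G.mem_goursatFst_iff_mem_goursatSnd h
  refine exists_graph_le_of_lift G hG fun v w hv hw => ?_
  obtain ⟨α, hα⟩ := exists_mulAut_of_mod_Q v (by rw [← hQ hv]; decide)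
  rw [h₂]
  exact ⟨α, hα, mul_mem (map_mem_Q α (by decide)) (inv_mem ((hQ hw).1 (by decide)))⟩

lemma nonempty_mulEquiv_of_goursat_eq_Z (h₁ : G.goursatFst = Z) (h₂ : G.goursatSnd = Z) :
    Nonempty (G ≃* SL23 × Multiplicative (ZMod 2)) := by
  obtain ⟨α, hα⟩ := exists_graph_le_of_goursat_eq_Z G hG h₁ h₂
  have hZ : Z ≃* Multiplicative (ZMod 2) := mulEquivOfPrimeCardEq card_Z (by simp)
  exact ⟨(G.prodGoursatSndMulEquiv α.toMonoidHom hα (h₂ ▸ Z_le_center)).symm.trans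
    (MulEquiv.prodCongr (MulEquiv.refl _) ((MulEquiv.subgroupCongr h₂).trans hZ))⟩

lemma nonempty_mulEquiv_of_goursat_eq_Q (h₁ : G.goursatFst = Q) (h₂ : G.goursatSnd = Q) :
    Nonempty (G ≃* PairSemidirect) := by
  obtain ⟨α, hα⟩ := exists_graph_le_of_goursat_eq_Q G hG h₁ h₂
  have hle : ∀ x, quaternionLift α x ∈ G := by
    intro x
    rw [← SemidirectProduct.inl_left_mul_inr_right x, map_mul, quaternionLift,
      SemidirectProduct.lift_inl, SemidirectProduct.lift_inr]
    refine mul_mem (G.goursatFst_prod_goursatSnd_le ⟨?_, ?_⟩) (pow_mem (hα u) _)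
    · rw [h₁]; exact quaternionHom_mem_Q _
    · rw [h₂]; exact map_mem_Q α (quaternionHom_mem_Q _)
  have hcard : Nat.card G = Nat.card PairSemidirect := by
    rw [← Nat.card_congr (G.prodGoursatSndEquiv α.toMonoidHom hα), Nat.card_prod, h₂,
      card_SL23, card_Q, SemidirectProduct.card, Nat.card_prod, Nat.card_eq_fintype_card,
      QuaternionGroup.card]
    simp
  have hinj : Function.Injective ((quaternionLift α).codRestrict G hle) :=
    fun x y h => quaternionLift_injective α (congrArg Subtype.val h)
  exact ⟨(MulEquiv.ofBijective _ (hinj.bijective_of_nat_card_le hcard.le)).symm⟩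

end Subdirect

theorem subdirect_classification (G : Subgroup (SL23 × SL23))
    (hG₁ : Function.Surjective (Prod.fst ∘ G.subtype))
    (hG₂ : Function.Surjective (Prod.snd ∘ G.subtype))
    (hcard : Nat.card G.goursatFst = Nat.card G.goursatSnd) :
    Nonempty (G ≃* SL23) ∨ Nonempty (G ≃* SL23 × SL23) ∨ Nonempty (G ≃* PairSemidirect) ∨
      Nonempty (G ≃* SL23 × Multiplicative (ZMod 2)) := by
  have := G.normal_goursatFst hG₁
  have := G.normal_goursatSnd hG₂
  have h₂ : G.goursatSnd = G.goursatFst := normal_eq_of_card_eq hcard.symm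
  rcases normal_eq_bot_or_Z_or_Q_or_top G.goursatFst with h₁ | h₁ | h₁ | h₁ <;>
    rw [h₁] at h₂
  · exact Or.inl ⟨G.fstMulEquivOfGoursatSndEqBot hG₁ h₂⟩
  · exact Or.inr (Or.inr (Or.inr (nonempty_mulEquiv_of_goursat_eq_Z G hG₁ h₁ h₂)))
  · exact Or.inr (Or.inr (Or.inl (nonempty_mulEquiv_of_goursat_eq_Q G hG₁ h₁ h₂)))
  · exact Or.inr (Or.inl ⟨(MulEquiv.subgroupCongr (G.eq_top_of_goursatFst_eq_top h₁ h₂)).trans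
      Subgroup.topEquiv⟩)

end SL23

theorem stmt0_general (N : Type*) [Group N]
    (K₁ K₂ : Subgroup N) [K₁.Normal] [K₂.Normal]
    (hiso : Nonempty (K₁ ≃* K₂)) (hint : K₁ ⊓ K₂ = ⊥)
    (hq₁ : Nonempty ((N ⧸ K₁) ≃* SL23)) (hq₂ : Nonempty ((N ⧸ K₂) ≃* SL23)) :
    Nonempty (N ≃* SL23) ∨
    Nonempty (N ≃* SL23 × SL23) ∨
    (∃ σ : QuaternionGroup 2 ≃* QuaternionGroup 2,
      σ (QuaternionGroup.a 1) = QuaternionGroup.xa 0 ∧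
      σ (QuaternionGroup.xa 0) = QuaternionGroup.a 1 * QuaternionGroup.xa 0 ∧
      ∃ φ : Multiplicative (ZMod 3) →* MulAut (QuaternionGroup 2 × QuaternionGroup 2),
        (∀ x y : QuaternionGroup 2,
          φ (Multiplicative.ofAdd 1) (x, y) = (σ x, σ y)) ∧
        Nonempty (N ≃*
          (QuaternionGroup 2 × QuaternionGroup 2) ⋊[φ] Multiplicative (ZMod 3))) ∨
    Nonempty (N ≃* SL23 × Multiplicative (ZMod 2)) := by
  obtain ⟨e₁⟩ := hq₁
  obtain ⟨e₂⟩ := hq₂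
  let f₁ : N →* SL23 := (e₁ : N ⧸ K₁ →* SL23).comp (QuotientGroup.mk' K₁)
  let f₂ : N →* SL23 := (e₂ : N ⧸ K₂ →* SL23).comp (QuotientGroup.mk' K₂)
  have hinf : f₁.ker ⊓ f₂.ker = ⊥ := by simpa [f₁, f₂] using hint
  let G := (f₁.prod f₂).range
  have hN : N ≃* G := MonoidHom.ofInjective <| (MonoidHom.ker_eq_bot_iff _).1 <| by
    rw [MonoidHom.ker_prod, hinf]
  have hcard : Nat.card G.goursatFst = Nat.card G.goursatSnd := by
    rw [f₁.card_goursatFst_range_prod f₂ hinf, f₁.card_goursatSnd_range_prod f₂ hinf]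
    simpa [f₁, f₂] using Nat.card_congr hiso.some.toEquiv.symm
  rcases SL23.subdirect_classification G
      (f₁.surjective_fst_comp_range_prod f₂ (e₁.surjective.comp (QuotientGroup.mk'_surjective _)))
      (f₁.surjective_snd_comp_range_prod f₂ (e₂.surjective.comp (QuotientGroup.mk'_surjective _)))
      hcard with h | h | h | h
  · exact Or.inl (h.map hN.trans)
  · exact Or.inr (Or.inl (h.map hN.trans))
  · exact Or.inr (Or.inr (Or.inl ⟨_, QuaternionGroup.rotation_a_one,
      QuaternionGroup.rotation_xa_zero, _, QuaternionGroup.diagonalRotation_ofAdd_one,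
      h.map hN.trans⟩))
  · exact Or.inr (Or.inr (Or.inr (h.map hN.trans)))

/-- Lemma (losHs): a finite group with two isomorphic normal subgroups intersecting
trivially, both with quotient `SL(2,3)`, is isomorphic to `SL(2,3)`,
`SL(2,3) × SL(2,3)`, `(Q₈ × Q₈) ⋊ C₃` (with `C₃` acting diagonally by the order-3
automorphism `i ↦ j`, `j ↦ ij`), or `SL(2,3) × C₂`. -/
theorem stmt0 (N : Type*) [Group N] [Finite N]
    (K₁ K₂ : Subgroup N) [K₁.Normal] [K₂.Normal]
    (hiso : Nonempty (K₁ ≃* K₂)) (hint : K₁ ⊓ K₂ = ⊥)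
    (hq₁ : Nonempty ((N ⧸ K₁) ≃* SL23)) (hq₂ : Nonempty ((N ⧸ K₂) ≃* SL23)) :
    Nonempty (N ≃* SL23) ∨
    Nonempty (N ≃* SL23 × SL23) ∨
    (∃ σ : QuaternionGroup 2 ≃* QuaternionGroup 2,
      σ (QuaternionGroup.a 1) = QuaternionGroup.xa 0 ∧
      σ (QuaternionGroup.xa 0) = QuaternionGroup.a 1 * QuaternionGroup.xa 0 ∧
      ∃ φ : Multiplicative (ZMod 3) →* MulAut (QuaternionGroup 2 × QuaternionGroup 2),
        (∀ x y : QuaternionGroup 2,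
          φ (Multiplicative.ofAdd 1) (x, y) = (σ x, σ y)) ∧
        Nonempty (N ≃*
          (QuaternionGroup 2 × QuaternionGroup 2) ⋊[φ] Multiplicative (ZMod 3))) ∨
    Nonempty (N ≃* SL23 × Multiplicative (ZMod 2)) :=
  stmt0_general N K₁ K₂ hiso hint hq₁ hq₂
end

section
/- Let g be an element of finite order n in GL₂(F) where F is a field of degree at most 2 over ℚ. Then φ(n) ≤ 4, where φ is the Euler totient function. -/
/-!
The minimal polynomial `μ` of `g` divides both the characteristic polynomial, so it has degree at
most `2`, and `X ^ n - 1`, so it is separable. Adjoining one root of `μ` to `F` gives a field `E`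
with `[E : F] ≤ 2` over which `μ` splits into distinct linear factors, and then `g ^ k = 1` exactly
when every root of `μ` in `E` is a `k`-th root of unity. The roots are `n`-th roots of unity and the
group of these is cyclic, so its order `d ≤ n` kills `g`, forcing `d = n`: hence `E` contains a
primitive `n`-th root of unity, and `φ(n) = [ℚ(ζₙ) : ℚ] ≤ [E : ℚ] ≤ 4`.
-/

open Polynomial IntermediateField

theorem Matrix.natDegree_minpoly_le {ι K : Type*} [Fintype ι] [DecidableEq ι] [Field K]
    (M : Matrix ι ι K) : (minpoly K M).natDegree ≤ Fintype.card ι := by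
  simpa [M.charpoly_natDegree_eq_dim] using
    natDegree_le_of_dvd M.minpoly_dvd_charpoly M.charpoly_monic.ne_zero

theorem pow_natCard_rootsOfUnity_eq_one {M : Type*} [CommMonoid M] {n : ℕ} [NeZero n] {r : M}
    (hr : r ^ n = 1) : r ^ Nat.card (rootsOfUnity n M) = 1 := by
  rw [← rootsOfUnity.coe_mkOfPowEq hr, ← Units.val_pow_eq_pow_val, ← Subgroup.coe_pow,
    pow_card_eq_one', Subgroup.coe_one, Units.val_one]

section Field

variable {E : Type*} [Field E]

theorem Polynomial.Splits.dvd_iff_forall_isRoot {f g : E[X]} (hf : f.Splits)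
    (hsep : f.Separable) (hg : g ≠ 0) : f ∣ g ↔ ∀ r ∈ f.roots, g.IsRoot r := by
  rw [hf.dvd_iff_roots_le_roots hsep.ne_zero hg, Multiset.le_iff_subset (nodup_roots hsep)]
  simp only [Multiset.subset_iff, mem_roots hg]

theorem Polynomial.splits_of_natDegree_le_two_of_isRoot {f : E[X]} (hf : f.natDegree ≤ 2)
    {r : E} (hr : f.IsRoot r) : f.Splits := by
  rw [← mul_divByMonic_eq_iff_isRoot.mpr hr, splits_X_sub_C_mul_iff]
  refine Splits.of_natDegree_le_one ?_
  rw [natDegree_divByMonic _ (monic_X_sub_C r), natDegree_X_sub_C]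
  omega

theorem IsPrimitiveRoot.totient_le_finrank {K : Type*} [Field K] [Algebra K E]
    [FiniteDimensional K E] {ζ : E} {n : ℕ} (hζ : IsPrimitiveRoot ζ n)
    (hirr : Irreducible (cyclotomic n K)) : n.totient ≤ Module.finrank K E := by
  simpa using hζ.lcm_totient_le_finrank hζ (by simpa using hirr)

end Field

section Minpoly

variable {F A E : Type*} [Field F] [Ring A] [Algebra F A] [Field E] [Algebra F E]

theorem pow_eq_one_iff_forall_aroots_minpoly {x : A}
    (hsplit : ((minpoly F x).map (algebraMap F E)).Splits) (hsep : (minpoly F x).Separable)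
    {k : ℕ} (hk : k ≠ 0) : x ^ k = 1 ↔ ∀ r ∈ (minpoly F x).aroots E, r ^ k = 1 := by
  have hne : (X ^ k - 1 : E[X]) ≠ 0 := by
    simpa using X_pow_sub_C_ne_zero (Nat.pos_of_ne_zero hk) (1 : E)
  have hdvd : x ^ k = 1 ↔ minpoly F x ∣ X ^ k - 1 := by
    rw [minpoly.dvd_iff, map_sub, map_pow, aeval_X, map_one, sub_eq_zero]
  rw [hdvd, ← map_dvd_map' (algebraMap F E), Polynomial.map_sub, Polynomial.map_pow, map_X,
    Polynomial.map_one, hsplit.dvd_iff_forall_isRoot hsep.map hne]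
  simp only [IsRoot.def, eval_sub, eval_pow, eval_X, eval_one, sub_eq_zero, aroots]

theorem exists_isPrimitiveRoot_of_orderOf_eq {x : A} {n : ℕ} (hx : orderOf x = n)
    (hn : (n : F) ≠ 0) (hsplit : ((minpoly F x).map (algebraMap F E)).Splits) :
    ∃ ζ : E, IsPrimitiveRoot ζ n := by
  have : NeZero n := ⟨by rintro rfl; exact hn Nat.cast_zero⟩
  have hxn : x ^ n = 1 := hx ▸ pow_orderOf_eq_one x
  have hsep : (minpoly F x).Separable :=
    (separable_X_pow_sub_C 1 hn one_ne_zero).of_dvd <| minpoly.dvd F x (by simp [hxn])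
  have hroots := (pow_eq_one_iff_forall_aroots_minpoly hsplit hsep (NeZero.ne n)).mp hxn
  have hcard : x ^ Nat.card (rootsOfUnity n E) = 1 :=
    (pow_eq_one_iff_forall_aroots_minpoly hsplit hsep Nat.card_pos.ne').mpr
      fun r hr ↦ pow_natCard_rootsOfUnity_eq_one (hroots r hr)
  have hle : n ≤ Nat.card (rootsOfUnity n E) :=
    Nat.le_of_dvd Nat.card_pos (hx ▸ orderOf_dvd_of_pow_eq_one hcard :)
  exact card_rootsOfUnity_eq_iff_exists_isPrimitiveRoot.mp <|
    le_antisymm (card_rootsOfUnity E n) hle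

end Minpoly

namespace IntermediateField

variable {F K : Type*} [Field F] [Field K] [Algebra F K] {f : F[X]} {r : K}

theorem finrank_adjoin_simple_le_natDegree (hf : f ≠ 0) (hr : aeval r f = 0) :
    Module.finrank F F⟮r⟯ ≤ f.natDegree := by
  rw [adjoin.finrank (IsAlgebraic.isIntegral ⟨f, hf, hr⟩)]
  exact natDegree_le_of_dvd (minpoly.dvd F r hr) hf

theorem splits_map_adjoin_simple_of_natDegree_le_two (hf : f.natDegree ≤ 2)
    (hr : aeval r f = 0) : (f.map (algebraMap F F⟮r⟯)).Splits := by
  refine splits_of_natDegree_le_two_of_isRoot (natDegree_map_le.trans hf)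
    (r := AdjoinSimple.gen F r) ?_
  rw [IsRoot.def, eval_map_algebraMap]
  apply (algebraMap F⟮r⟯ K).injective
  rw [← aeval_algebraMap_apply, AdjoinSimple.algebraMap_gen, hr, map_zero]

end IntermediateField

/-- If `g` is an element of finite order `n` in `GL₂(F)` with `F` a field of degree at
most 2 over `ℚ`, then `φ(n) ≤ 4`. -/
theorem stmt3 (F : Type*) [Field F] [Algebra ℚ F] [FiniteDimensional ℚ F]
    (hF : Module.finrank ℚ F ≤ 2)
    (g : Matrix.GeneralLinearGroup (Fin 2) F) (n : ℕ)
    (hn : orderOf g = n) (hpos : 0 < n) :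
    Nat.totient n ≤ 4 := by
  have : CharZero F := charZero_of_injective_algebraMap (algebraMap ℚ F).injective
  set x : Matrix (Fin 2) (Fin 2) F := g.val
  have hx : orderOf x = n := orderOf_units.trans hn
  have hdeg : (minpoly F x).natDegree ≤ 2 := by simpa using x.natDegree_minpoly_le
  obtain ⟨r, hr⟩ := IsAlgClosed.exists_aeval_eq_zero (AlgebraicClosure F) (minpoly F x)
    (minpoly.degree_pos x.isIntegral).ne'
  obtain ⟨ζ, hζ⟩ := exists_isPrimitiveRoot_of_orderOf_eq hx (Nat.cast_ne_zero.mpr hpos.ne')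
    (splits_map_adjoin_simple_of_natDegree_le_two hdeg hr)
  have hEF : Module.finrank F F⟮r⟯ ≤ 2 :=
    (finrank_adjoin_simple_le_natDegree (minpoly.ne_zero x.isIntegral) hr).trans hdeg
  have : FiniteDimensional F F⟮r⟯ := adjoin.finiteDimensional (Algebra.IsIntegral.isIntegral r)
  have : FiniteDimensional ℚ F⟮r⟯ := Module.Finite.trans F _
  calc n.totient ≤ Module.finrank ℚ F⟮r⟯ := hζ.totient_le_finrank (cyclotomic.irreducible_rat hpos)
    _ = Module.finrank ℚ F * Module.finrank F F⟮r⟯ := (Module.finrank_mul_finrank ℚ F _).symm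
    _ ≤ 2 * 2 := Nat.mul_le_mul hF hEF
end

section
/- Let P be a group of order 16 with center Z(P) ≅ C₂ × C₂ and P/Z(P) ≅ C₂ × C₂, such that P contains two central subgroups K₁ = ⟨z₁⟩, K₂ = ⟨z₂⟩ of order 2 with K₁ ∩ K₂ = 1 and P/K₁ ≅ P/K₂ ≅ Q₈. Then P ≅ Q₈ × C₂. -/
/-!
Lift the generators `i, j` of `P ⧸ ⟨z₁⟩ ≅ Q₈` to `A, B ∈ P`. A lift `x` of an element of order 4
of `P ⧸ ⟨z₁⟩` is not central, and neither is its image in `P ⧸ ⟨z₂⟩ ≅ Q₈`, whose centre is the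
image of `⟨z₁, z₂⟩ ≤ Z(P)`. So `x²` maps to the unique involution `z₁` of `P ⧸ ⟨z₂⟩`, i.e.
`x² ∈ {z₁, z₁z₂}`, and `x² ≠ z₁` because `x²` survives modulo `⟨z₁⟩`. Hence
`A² = B² = (AB)² = z₁z₂`, so `A, B` satisfy the defining relations of `Q₈` and span a
complement of the central subgroup `⟨z₁⟩`.
-/

open Subgroup QuaternionGroup

theorem eq_one_or_eq_of_mem_zpowers_of_orderOf_eq_two {G : Type*} [Group G] {z x : G}
    (hz : orderOf z = 2) (hx : x ∈ zpowers z) : x = 1 ∨ x = z := by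
  classical
  have hfin : IsOfFinOrder z := orderOf_pos_iff.mp (by omega)
  rw [hfin.mem_zpowers_iff_mem_range_orderOf, hz] at hx
  obtain ⟨k, hk, rfl⟩ : ∃ k ≤ 1, z ^ k = x := by simpa using hx
  interval_cases k <;> simp

theorem QuotientGroup.mk_mem_center {G : Type*} [Group G] {N : Subgroup G} [N.Normal] {x : G}
    (hx : x ∈ center G) : (x : G ⧸ N) ∈ center (G ⧸ N) := by
  rw [mem_center_iff]
  rintro ⟨g⟩
  exact congrArg _ (mem_center_iff.mp hx g)

theorem mul_eq_inv_mul_of_sq_eq {G : Type*} [Group G] {A B : G} (hB : B ^ 2 = A ^ 2)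
    (hAB : (A * B) ^ 2 = A ^ 2) : B * A = A⁻¹ * B := by
  have hBAB : B * A * B = A := by
    apply mul_left_cancel (a := A)
    calc A * (B * A * B) = (A * B) ^ 2 := by rw [sq]; group
      _ = A * A := by rw [hAB, sq]
  calc B * A = A * B⁻¹ := eq_mul_inv_of_mul_eq hBAB
    _ = A⁻¹ * B := by
      rw [eq_inv_mul_iff_mul_eq, ← mul_assoc, mul_inv_eq_iff_eq_mul, ← sq, ← sq, hB]

section ZModPowers

variable {G : Type*} [Group G] {m : ℕ} [NeZero m]

def zmodPowersHom (x : G) (hx : x ^ m = 1) : Multiplicative (ZMod m) →* G where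
  toFun i := x ^ i.toAdd.val
  map_one' := by simp
  map_mul' i j := by
    simp only [toAdd_mul, ZMod.val_add, ← pow_eq_pow_mod _ hx, pow_add]

theorem zmodPowersHom_apply (x : G) (hx : x ^ m = 1) (i : Multiplicative (ZMod m)) :
    zmodPowersHom x hx i = x ^ i.toAdd.val := rfl

theorem zmodPowersHom_injective {x : G} (hx : orderOf x = m) :
    Function.Injective (zmodPowersHom x (hx ▸ pow_orderOf_eq_one x)) := by
  rw [injective_iff_map_eq_one]
  intro i hi
  rw [zmodPowersHom_apply, orderOf_dvd_iff_pow_eq_one.symm, hx] at hi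
  exact (ZMod.val_eq_zero _).mp (Nat.eq_zero_of_dvd_of_lt hi (ZMod.val_lt _))

theorem mul_zmodPowersHom_of_mul_eq_inv_mul {x y : G} (hx : x ^ m = 1)
    (h : y * x = x⁻¹ * y) (i : Multiplicative (ZMod m)) :
    y * zmodPowersHom x hx i = zmodPowersHom x hx i⁻¹ * y := by
  rw [map_inv, zmodPowersHom_apply, ← inv_pow]
  exact (SemiconjBy.pow_right h _).eq

end ZModPowers

theorem MonoidHom.disjoint_range_ker_of_injective_comp {M P Q : Type*} [Group M] [Group P]
    [Group Q] {f : M →* P} {π : P →* Q} (h : Function.Injective (π.comp f)) :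
    Disjoint f.range π.ker := by
  rw [disjoint_iff_inf_le]
  rintro _ ⟨⟨m, rfl⟩, hm⟩
  rw [h (by simpa using hm : π.comp f m = π.comp f 1), map_one]
  exact one_mem _

theorem nonempty_mulEquiv_prod_zmod_of_injective_comp_mk {P H : Type*} [Group P] [Group H]
    [Finite P] {z : P} [(zpowers z).Normal] {m : ℕ} [NeZero m] (hz : z ∈ center P)
    (ho : orderOf z = m) (f : H →* P)
    (hf : Function.Injective ((QuotientGroup.mk' (zpowers z)).comp f))
    (hcard : Nat.card P = Nat.card H * m) : Nonempty (P ≃* H × Multiplicative (ZMod m)) := by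
  let g := zmodPowersHom z (ho ▸ pow_orderOf_eq_one z)
  have comm (x t) : Commute (f x) (g t) := mem_center_iff.mp (pow_mem hz _) (f x)
  have hg : g.range ≤ (QuotientGroup.mk' (zpowers z)).ker := by
    rw [QuotientGroup.ker_mk']
    rintro _ ⟨t, rfl⟩
    exact pow_mem (mem_zpowers z) _
  refine ⟨(MulEquiv.ofBijective (f.noncommCoprod g comm) ?_).symm⟩
  rw [Nat.bijective_iff_injective_and_card, hcard, MonoidHom.noncommCoprod_injective]
  refine ⟨⟨hf.of_comp (f := QuotientGroup.mk' _), zmodPowersHom_injective ho,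
    (MonoidHom.disjoint_range_ker_of_injective_comp hf).mono_right hg⟩, ?_⟩
  simp [Nat.card_prod]

namespace QuaternionGroup

theorem mem_center_iff_eq_one_or_eq_a_two {x : QuaternionGroup 2} :
    x ∈ center (QuaternionGroup 2) ↔ x = 1 ∨ x = a 2 := by
  rw [mem_center_iff]
  revert x
  decide

theorem sq_eq_a_two_iff_not_mem_center {x : QuaternionGroup 2} :
    x ^ 2 = a 2 ↔ x ∉ center (QuaternionGroup 2) := by
  rw [mem_center_iff]
  revert x
  decide

theorem eq_a_two_of_sq_eq_one {x : QuaternionGroup 2} (h : x ^ 2 = 1) (hx : x ≠ 1) :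
    x = a 2 := by
  revert x
  decide

variable {n : ℕ} [NeZero n] {G : Type*} [Group G]

theorem hom_ext {f g : QuaternionGroup n →* G} (ha : f (a 1) = g (a 1))
    (hxa : f (xa 0) = g (xa 0)) : f = g := by
  have hak (i : ZMod (2 * n)) : f (a i) = g (a i) := by
    rw [← ZMod.natCast_zmod_val i, ← a_one_pow, map_pow, map_pow, ha]
  ext (i | i)
  · exact hak i
  · rw [← zero_add i, ← xa_mul_a, map_mul, map_mul, hxa, hak]

section Lift

variable (A B : G) (hA : A ^ (2 * n) = 1) (hB : B ^ 2 = A ^ n) (hBA : B * A = A⁻¹ * B)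

def lift : QuaternionGroup n →* G where
  toFun
    | a i => zmodPowersHom A hA (.ofAdd i)
    | xa i => B * zmodPowersHom A hA (.ofAdd i)
  map_one' := map_one (zmodPowersHom A hA)
  map_mul' := by
    have hBA' := mul_zmodPowersHom_of_mul_eq_inv_mul hA hBA
    have hn : zmodPowersHom A hA (.ofAdd (n : ZMod (2 * n))) = A ^ n := by
      rw [zmodPowersHom_apply, toAdd_ofAdd, ZMod.val_natCast,
        Nat.mod_eq_of_lt (by have := NeZero.pos n; omega)]
    rintro (i | i) (j | j)
    · simp only [a_mul_a, ofAdd_add, map_mul]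
    · simp only [a_mul_xa, sub_eq_neg_add, ofAdd_add, ofAdd_neg, map_mul, ← mul_assoc]
      rw [← inv_inv (Multiplicative.ofAdd i), hBA', inv_inv]
    · simp only [xa_mul_a, ofAdd_add, map_mul, mul_assoc]
    · simp only [xa_mul_xa, sub_eq_neg_add, ofAdd_add, ofAdd_neg, map_mul, hn, ← hB]
      rw [← mul_assoc, ← mul_assoc, hBA', sq]
      simp only [mul_assoc]

@[simp]
theorem lift_a_one : lift A B hA hB hBA (a 1) = A := by
  change A ^ (1 : ZMod (2 * n)).val = A
  rw [ZMod.val_one_eq_one_mod, Nat.mod_eq_of_lt (by have := NeZero.pos n; omega), pow_one]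

@[simp]
theorem lift_xa_zero : lift A B hA hB hBA (xa 0) = B := by
  change B * A ^ (0 : ZMod (2 * n)).val = B
  rw [ZMod.val_zero, pow_zero, mul_one]

end Lift

end QuaternionGroup

section CentralExtensionOfQ8

variable {P : Type*} [Group P] {z₁ z₂ : P}

theorem mk_eq_a_two_of_not_mem_zpowers [(zpowers z₂).Normal]
    (e : P ⧸ zpowers z₂ ≃* QuaternionGroup 2) (ho₁ : orderOf z₁ = 2) (h : z₁ ∉ zpowers z₂) :
    e z₁ = a 2 := by
  have hz₁ : z₁ ^ 2 = 1 := ho₁ ▸ pow_orderOf_eq_one z₁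
  apply eq_a_two_of_sq_eq_one
  · rw [← map_pow, ← QuotientGroup.mk_pow, hz₁, QuotientGroup.mk_one, map_one]
  · rwa [Ne, map_eq_one_iff _ e.injective, QuotientGroup.eq_one_iff]

theorem mem_center_of_mk_mem_center [(zpowers z₂).Normal]
    (e : P ⧸ zpowers z₂ ≃* QuaternionGroup 2) (hz₁ : z₁ ∈ center P) (hz₂ : z₂ ∈ center P)
    (ho₁ : orderOf z₁ = 2) (h : z₁ ∉ zpowers z₂) {x : P}
    (hx : (x : P ⧸ zpowers z₂) ∈ center (P ⧸ zpowers z₂)) : x ∈ center P := by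
  have hK : zpowers z₂ ≤ center P := zpowers_le.mpr hz₂
  rcases mem_center_iff_eq_one_or_eq_a_two.mp (MulEquivClass.apply_mem_center e hx) with hx | hx
  · rw [map_eq_one_iff _ e.injective, QuotientGroup.eq_one_iff] at hx
    exact hK hx
  · rw [← mk_eq_a_two_of_not_mem_zpowers e ho₁ h, e.injective.eq_iff, eq_comm,
      QuotientGroup.eq] at hx
    simpa using mul_mem hz₁ (hK hx)

theorem sq_eq_mul_of_sq_mk_eq_a_two [(zpowers z₁).Normal] [(zpowers z₂).Normal]
    (e₁ : P ⧸ zpowers z₁ ≃* QuaternionGroup 2) (e₂ : P ⧸ zpowers z₂ ≃* QuaternionGroup 2)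
    (hz₁ : z₁ ∈ center P) (hz₂ : z₂ ∈ center P) (ho₁ : orderOf z₁ = 2) (ho₂ : orderOf z₂ = 2)
    (h : z₁ ∉ zpowers z₂) {x : P} (hx : e₁ x ^ 2 = a 2) : x ^ 2 = z₁ * z₂ := by
  have hxc : x ∉ center P := fun hc ↦ sq_eq_a_two_iff_not_mem_center.mp hx
    (MulEquivClass.apply_mem_center e₁ (QuotientGroup.mk_mem_center hc))
  have hx₂ : e₂ x ^ 2 = a 2 := sq_eq_a_two_iff_not_mem_center.mpr fun hc ↦ hxc <|
    mem_center_of_mk_mem_center e₂ hz₁ hz₂ ho₁ h ((MulEquivClass.apply_mem_center_iff e₂).mp hc)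
  rw [← mk_eq_a_two_of_not_mem_zpowers e₂ ho₁ h, ← map_pow, e₂.injective.eq_iff,
    ← QuotientGroup.mk_pow, eq_comm, QuotientGroup.eq] at hx₂
  rcases eq_one_or_eq_of_mem_zpowers_of_orderOf_eq_two ho₂ hx₂ with hx₂ | hx₂
  · have hx₁ : e₁ x ^ 2 = 1 := by
      rw [← map_pow, ← QuotientGroup.mk_pow, ← inv_mul_eq_one.mp hx₂,
        (QuotientGroup.eq_one_iff _).mpr (mem_zpowers z₁), map_one]
    exact absurd (hx.symm.trans hx₁) (by decide)
  · rw [← hx₂, mul_inv_cancel_left]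

theorem exists_hom_injective_comp_mk [(zpowers z₁).Normal] [(zpowers z₂).Normal]
    (e₁ : P ⧸ zpowers z₁ ≃* QuaternionGroup 2) (e₂ : P ⧸ zpowers z₂ ≃* QuaternionGroup 2)
    (hz₁ : z₁ ∈ center P) (hz₂ : z₂ ∈ center P) (ho₁ : orderOf z₁ = 2) (ho₂ : orderOf z₂ = 2)
    (h : z₁ ∉ zpowers z₂) :
    ∃ f : QuaternionGroup 2 →* P, Function.Injective ((QuotientGroup.mk' (zpowers z₁)).comp f) := by
  have hsq (x : P) (hx : e₁ x ^ 2 = a 2) : x ^ 2 = z₁ * z₂ :=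
    sq_eq_mul_of_sq_mk_eq_a_two e₁ e₂ hz₁ hz₂ ho₁ ho₂ h hx
  obtain ⟨A, hA⟩ := QuotientGroup.mk_surjective (e₁.symm (a 1))
  obtain ⟨B, hB⟩ := QuotientGroup.mk_surjective (e₁.symm (xa 0))
  have hA2 : A ^ 2 = z₁ * z₂ := hsq A (by rw [hA, e₁.apply_symm_apply]; decide)
  have hB2 : B ^ 2 = A ^ 2 := (hsq B (by rw [hB, e₁.apply_symm_apply]; decide)).trans hA2.symm
  have hAB2 : (A * B) ^ 2 = A ^ 2 := (hsq (A * B) (by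
    rw [QuotientGroup.mk_mul, map_mul, hA, hB, e₁.apply_symm_apply, e₁.apply_symm_apply]
    decide)).trans hA2.symm
  have hA4 : A ^ (2 * 2) = 1 := by
    rw [pow_mul, hA2, Commute.mul_pow (mem_center_iff.mp hz₁ z₂).symm,
      (ho₁ ▸ pow_orderOf_eq_one z₁ : z₁ ^ 2 = 1), (ho₂ ▸ pow_orderOf_eq_one z₂ : z₂ ^ 2 = 1),
      one_mul]
  let f := lift A B hA4 hB2 (mul_eq_inv_mul_of_sq_eq hB2 hAB2)
  have hf : (e₁.toMonoidHom.comp (QuotientGroup.mk' _)).comp f = MonoidHom.id _ :=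
    hom_ext (by simp [f, hA]) (by simp [f, hB])
  exact ⟨f, Function.LeftInverse.injective (g := e₁) (DFunLike.congr_fun hf)⟩

end CentralExtensionOfQ8

theorem stmt10_general (P : Type*) [Group P] [Finite P] (hcard : Nat.card P = 16)
    (z₁ z₂ : P) (hz₁ : z₁ ∈ Subgroup.center P) (hz₂ : z₂ ∈ Subgroup.center P)
    (ho₁ : orderOf z₁ = 2) (ho₂ : orderOf z₂ = 2)
    (hint : Subgroup.zpowers z₁ ⊓ Subgroup.zpowers z₂ = ⊥)
    [(Subgroup.zpowers z₁).Normal] [(Subgroup.zpowers z₂).Normal]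
    (hq₁ : Nonempty ((P ⧸ Subgroup.zpowers z₁) ≃* QuaternionGroup 2))
    (hq₂ : Nonempty ((P ⧸ Subgroup.zpowers z₂) ≃* QuaternionGroup 2)) :
    Nonempty (P ≃* QuaternionGroup 2 × Multiplicative (ZMod 2)) := by
  obtain ⟨e₁⟩ := hq₁
  obtain ⟨e₂⟩ := hq₂
  have hz₁₂ : z₁ ∉ zpowers z₂ := fun h ↦ by
    have : z₁ = 1 := by simpa [hint] using mem_inf.mpr ⟨mem_zpowers z₁, h⟩
    simp [this] at ho₁
  obtain ⟨f, hf⟩ := exists_hom_injective_comp_mk e₁ e₂ hz₁ hz₂ ho₁ ho₂ hz₁₂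
  refine nonempty_mulEquiv_prod_zmod_of_injective_comp_mk hz₁ ho₁ f hf ?_
  rw [hcard, Nat.card_eq_fintype_card, QuaternionGroup.card]

/-- Let `P` be a group of order 16 with `Z(P) ≅ C₂ × C₂` and `P/Z(P) ≅ C₂ × C₂`,
containing central elements `z₁, z₂` of order 2 with `⟨z₁⟩ ∩ ⟨z₂⟩ = 1` and
`P/⟨z₁⟩ ≅ P/⟨z₂⟩ ≅ Q₈`. Then `P ≅ Q₈ × C₂`. -/
theorem stmt10 (P : Type*) [Group P] [Finite P] (hcard : Nat.card P = 16)
    (hZ : Nonempty (Subgroup.center P ≃*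
      Multiplicative (ZMod 2) × Multiplicative (ZMod 2)))
    (hPZ : Nonempty ((P ⧸ Subgroup.center P) ≃*
      Multiplicative (ZMod 2) × Multiplicative (ZMod 2)))
    (z₁ z₂ : P) (hz₁ : z₁ ∈ Subgroup.center P) (hz₂ : z₂ ∈ Subgroup.center P)
    (ho₁ : orderOf z₁ = 2) (ho₂ : orderOf z₂ = 2)
    (hint : Subgroup.zpowers z₁ ⊓ Subgroup.zpowers z₂ = ⊥)
    [(Subgroup.zpowers z₁).Normal] [(Subgroup.zpowers z₂).Normal]
    (hq₁ : Nonempty ((P ⧸ Subgroup.zpowers z₁) ≃* QuaternionGroup 2))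
    (hq₂ : Nonempty ((P ⧸ Subgroup.zpowers z₂) ≃* QuaternionGroup 2)) :
    Nonempty (P ≃* QuaternionGroup 2 × Multiplicative (ZMod 2)) :=
  stmt10_general P hcard z₁ z₂ hz₁ hz₂ ho₁ ho₂ hint hq₁ hq₂
end
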